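/- Special case Y ≡ 1 (each working period starts with one customer): if in addition ψ(1) = 1 (so Ψ(z) = z and EY = 1), then for every z ∈ (0,1), G̃₁(z) = ((1−λ·EB·ES)/(λ·ES))·λ·A(z)·z/(1 − λ·A(z)·(1−B(z))/(1−z)), where G̃₁(z) = G₁(z)/p₁ with p₁ = ES/((1−ρ)·ET). -/

import Mathlib

private lemma conv_partial_le (f g : ℕ → ℝ) (hf : ∀ k, 0 ≤ f k) (hg : ∀ k, 0 ≤ g k) (N : ℕ) :
    ∑ j ∈ Finset.range N, ∑ k ∈ Finset.range (j + 1), f k * g (j - k)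
      ≤ (∑ k ∈ Finset.range N, f k) * ∑ m ∈ Finset.range N, g m := by
  have h := Finset.sum_Ico_Ico_comm 0 N (fun k j => f k * g (j - k))
  simp only [← Finset.range_eq_Ico] at h
  have h2 : (∑ j ∈ Finset.range N, ∑ k ∈ Finset.range (j + 1), f k * g (j - k))
      = ∑ k ∈ Finset.range N, ∑ j ∈ Finset.Ico k N, f k * g (j - k) := h.symm
  rw [h2, Finset.sum_mul]
  apply Finset.sum_le_sum
  intro k hk
  rw [← Finset.mul_sum, Finset.sum_Ico_eq_sum_range]
  apply mul_le_mul_of_nonneg_left _ (hf k)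
  simp only [Nat.add_sub_cancel_left, Nat.add_sub_cancel]
  apply Finset.sum_le_sum_of_subset_of_nonneg
  · apply Finset.range_subset_range.2; omega
  · intro m _ _; exact hg m

private lemma norm_eq_self_of_nonneg {f : ℕ → ℝ} (h : ∀ n, 0 ≤ f n) (hs : Summable f) :
    Summable (fun n => ‖f n‖) :=
  hs.congr (fun n => (Real.norm_of_nonneg (h n)).symm)

set_option maxHeartbeats 1000000 in
/-- Special case `Y ≡ 1`: if `ψ 1 = 1`, then for every `z ∈ (0,1)`,
`G̃₁(z) = ((1−λ·EB·ES)/(λ·ES))·λ·A(z)·z/(1−λ·A(z)·(1−B(z))/(1−z))`,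
where `G̃₁(z) = G₁(z)/p₁` with `p₁ = ES/((1−ρ)·ET)`. -/
theorem stmt_3
    (lam ET : ℝ) (hlam : 0 < lam) (hET : 0 < ET)
    (ψ b a p : ℕ → ℝ)
    (hψ0 : ψ 0 = 0) (hψnn : ∀ i, 0 ≤ ψ i) (hψ1 : HasSum ψ 1)
    (EY : ℝ) (hEY : HasSum (fun i : ℕ => (i : ℝ) * ψ i) EY)
    (hb0 : b 0 = 0) (hbnn : ∀ i, 0 ≤ b i) (hb1 : HasSum b 1)
    (EB : ℝ) (hEB : HasSum (fun i : ℕ => (i : ℝ) * b i) EB)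
    (hann : ∀ j, 0 ≤ a j)
    (ES : ℝ) (hES : HasSum a ES)
    (hρ0 : 0 < lam * ES * EB) (hρ1 : lam * ES * EB < 1)
    (hpnn : ∀ j, 0 ≤ p j) (hp0 : p 0 = 0)
    (hrec : ∀ j, 1 ≤ j → p j =
      (1 / ET) * ∑ s ∈ Finset.Icc 1 j, ψ s * a (j - s)
      + ∑ k ∈ Finset.Icc 1 j, a (j - k) *
          ((∑' i : ℕ, ψ (i + k + 1)) / ET
            + lam * ∑ i ∈ Finset.Icc 1 k, p i * (∑' m : ℕ, b (m + (k - i) + 1))))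
    (hψ1' : ψ 1 = 1)
    (z : ℝ) (hz0 : 0 < z) (hz1 : z < 1) :
    (∑' j : ℕ, p j * z ^ j) / (ES / ((1 - lam * ES * EB) * ET))
      = ((1 - lam * EB * ES) / (lam * ES)) * (lam * (∑' j : ℕ, a j * z ^ j) * z) /
          (1 - lam * (∑' j : ℕ, a j * z ^ j) *
            (1 - ∑' i : ℕ, b i * z ^ i) / (1 - z)) := by
  have hznn : (0:ℝ) ≤ z := hz0.le
  have hz1' : z ≤ 1 := hz1.le
  have h1z : (0:ℝ) < 1 - z := by linarith
  have hb' : Summable b := hb1.summable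
  have ha' : Summable a := hES.summable
  -- ψ vanishes off 1
  have hψzero : ∀ s, s ≠ 1 → ψ s = 0 := by
    intro s hs
    have h2 : ψ 1 + ψ s ≤ 1 := by
      have := Summable.sum_le_tsum ({1, s} : Finset ℕ) (fun i _ => hψnn i) hψ1.summable
      rw [hψ1.tsum_eq, Finset.sum_pair (Ne.symm hs)] at this
      exact this
    have h3 := hψnn s
    linarith [hψ1'.symm.le]
  -- tails of b
  have htlsummable : ∀ k : ℕ, Summable fun m : ℕ => b (m + k + 1) := by
    intro k
    have := (summable_nat_add_iff (k + 1)).2 hb'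
    exact this.congr (fun m => by rw [← Nat.add_assoc])
  have htlnn : ∀ k : ℕ, 0 ≤ ∑' m : ℕ, b (m + k + 1) :=
    fun k => tsum_nonneg fun m => hbnn _
  have htlle : ∀ k : ℕ, (∑' m : ℕ, b (m + k + 1)) ≤ 1 := by
    intro k
    rw [← hb1.tsum_eq]
    exact Summable.tsum_le_tsum_of_inj (fun m => m + k + 1)
      (fun x y hxy => by dsimp at hxy; omega) (fun i _ => hbnn i) (fun m => le_refl _) (htlsummable k) hb'
  have htlrec : ∀ k : ℕ, (∑' m : ℕ, b (m + k + 1)) = b (k + 1) + ∑' m : ℕ, b (m + (k+1) + 1) := by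
    intro k
    rw [Summable.tsum_eq_zero_add (htlsummable k)]
    congr 1
    · congr 1; omega
    · apply tsum_congr; intro m; congr 1; omega
  -- the sequences
  set u : ℕ → ℝ := fun t => a t * z ^ t with hu
  set q : ℕ → ℝ := fun i => p i * z ^ i with hq
  set v : ℕ → ℝ := fun m => (∑' i : ℕ, b (i + m + 1)) * z ^ m with hv
  set w : ℕ → ℝ := fun k => ∑ i ∈ Finset.range (k + 1), q i * v (k - i) with hw
  have hunn : ∀ t, 0 ≤ u t := fun t => mul_nonneg (hann t) (pow_nonneg hznn t)
  have hqnn : ∀ i, 0 ≤ q i := fun i => mul_nonneg (hpnn i) (pow_nonneg hznn i)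
  have hvnn : ∀ m, 0 ≤ v m := fun m => mul_nonneg (htlnn m) (pow_nonneg hznn m)
  have hwnn : ∀ k, 0 ≤ w k := fun k => Finset.sum_nonneg fun i _ => mul_nonneg (hqnn i) (hvnn _)
  have hq0 : q 0 = 0 := by simp [hq, hp0]
  have hw0 : w 0 = 0 := by simp [hw, hq0]
  have hule : ∀ t, u t ≤ a t := fun t => mul_le_of_le_one_right (hann t) (pow_le_one₀ hznn hz1')
  have hsu : Summable u := Summable.of_nonneg_of_le hunn hule ha'
  have hsv : Summable v := by
    apply Summable.of_nonneg_of_le hvnn (fun m => ?_) (summable_geometric_of_lt_one hznn hz1)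
    exact mul_le_of_le_one_left (pow_nonneg hznn m) (htlle m)
  have hsbz : Summable (fun i => b i * z ^ i) :=
    Summable.of_nonneg_of_le (fun i => mul_nonneg (hbnn i) (pow_nonneg hznn i))
      (fun i => mul_le_of_le_one_right (hbnn i) (pow_le_one₀ hznn hz1')) hb'
  set Az := ∑' t, u t with hAz
  set Bz := ∑' i, b i * z ^ i with hBz
  set Cz := ∑' m, v m with hCzdef
  have hAznn : 0 ≤ Az := tsum_nonneg hunn
  have hAzle : Az ≤ ES := by
    rw [hAz, ← hES.tsum_eq]
    exact Summable.tsum_le_tsum hule hsu ha'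
  have hCznn : 0 ≤ Cz := tsum_nonneg hvnn
  -- the identity (1 - z) * Cz = 1 - Bz
  have hsv1 : Summable (fun m => v (m + 1)) := (summable_nat_add_iff 1).2 hsv
  have hs6 : Summable (fun m : ℕ => (∑' i : ℕ, b (i + m + 1)) * z ^ (m + 1)) := by
    apply (hsv.mul_left z).congr
    intro m
    rw [hv]
    ring
  have hs7 : Summable (fun m : ℕ => b (m + 1) * z ^ (m + 1)) := (summable_nat_add_iff 1).2 hsbz
  have hCid : (1 - z) * Cz = 1 - Bz := by
    have e1 : Cz = v 0 + ∑' m, v (m + 1) := Summable.tsum_eq_zero_add hsv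
    have e2 : z * Cz = ∑' m : ℕ, (∑' i : ℕ, b (i + m + 1)) * z ^ (m + 1) := by
      rw [hCzdef, ← tsum_mul_left]
      apply tsum_congr; intro m; rw [hv]; ring
    have e3 : v 0 = 1 := by
      have h := Summable.tsum_eq_zero_add hb'
      rw [hb1.tsum_eq, hb0, zero_add] at h
      have h4 : v 0 = ∑' m : ℕ, b (m + 1) := by
        rw [hv]
        simp only [pow_zero, mul_one]
      rw [h4, ← h]
    have e4 : (∑' m : ℕ, b (m + 1) * z ^ (m + 1)) = Bz := by
      have h := Summable.tsum_eq_zero_add hsbz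
      rw [hb0, zero_mul, zero_add] at h
      rw [hBz, h]
    have e6 : (∑' m, v (m + 1))
        = (∑' m : ℕ, (∑' i : ℕ, b (i + m + 1)) * z ^ (m + 1))
          - ∑' m : ℕ, b (m + 1) * z ^ (m + 1) := by
      rw [← Summable.tsum_sub hs6 hs7]
      apply tsum_congr; intro m
      rw [hv]
      have h5 : (∑' i : ℕ, b (i + (m+1) + 1)) = (∑' i : ℕ, b (i + m + 1)) - b (m + 1) := by
        linarith [htlrec m]
      dsimp only
      rw [h5]
      ring
    have h6 : (1 - z) * Cz = Cz - z * Cz := by ring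
    rw [h6, e2, e1, e3, e6, ← e4]
    ring
  -- Cz ≤ EB
  have hEBnn : 0 ≤ EB := by
    rw [← hEB.tsum_eq]
    exact tsum_nonneg fun i => mul_nonneg (Nat.cast_nonneg i) (hbnn i)
  have hpow : ∀ i : ℕ, 1 - z ^ i ≤ (i : ℝ) * (1 - z) := by
    intro i
    induction i with
    | zero => simp
    | succ n ih =>
      have hzn : z ^ n ≤ 1 := pow_le_one₀ hznn hz1'
      have hzn' : 0 ≤ z ^ n := pow_nonneg hznn n
      have h7 : z ^ (n + 1) = z ^ n * z := pow_succ z n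
      push_cast
      nlinarith
  have hCzle : Cz ≤ EB := by
    have key : 1 - Bz ≤ (1 - z) * EB := by
      have e7 : 1 - Bz = ∑' i : ℕ, (b i - b i * z ^ i) := by
        rw [hBz, ← hb1.tsum_eq, ← Summable.tsum_sub hb' hsbz]
      have e8 : (∑' i : ℕ, (b i - b i * z ^ i)) ≤ ∑' i : ℕ, (1 - z) * ((i : ℝ) * b i) := by
        apply Summable.tsum_le_tsum _ (hb'.sub hsbz) (hEB.summable.mul_left (1 - z))
        intro i
        have h1 := hpow i
        have h2 := hbnn i
        nlinarith
      have e9 : (∑' i : ℕ, (1 - z) * ((i : ℝ) * b i)) = (1 - z) * EB := by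
        rw [tsum_mul_left, hEB.tsum_eq]
      linarith
    nlinarith [hCid]
  -- positivity of ES, EB
  have hESnn : 0 ≤ ES := by rw [← hES.tsum_eq]; exact tsum_nonneg hann
  have hESpos : 0 < ES := by
    rcases hESnn.lt_or_eq with h | h
    · exact h
    · exfalso; rw [← h] at hρ0; nlinarith
  have hEBpos : 0 < EB := by
    rcases hEBnn.lt_or_eq with h | h
    · exact h
    · exfalso; rw [← h] at hρ0; nlinarith
  -- the z-weighted recursion
  set r : ℕ → ℝ := fun j => if j = 0 then 0 else (z / ET) * u (j - 1) with hr
  have hrnn : ∀ j, 0 ≤ r j := by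
    intro j
    rw [hr]
    dsimp only
    split
    · exact le_refl 0
    · exact mul_nonneg (div_nonneg hznn hET.le) (hunn _)
  have hkey : ∀ j : ℕ, q j = r j + lam * ∑ k ∈ Finset.range (j + 1), u k * w (j - k) := by
    intro j
    rcases Nat.eq_zero_or_pos j with hj | hj
    · subst hj
      simp [hr, hq0, hw0]
    · have hj1 : 1 ≤ j := hj
      have hA : ∑ s ∈ Finset.Icc 1 j, ψ s * a (j - s) = a (j - 1) := by
        rw [Finset.sum_eq_single_of_mem 1 (Finset.mem_Icc.2 ⟨le_refl 1, hj1⟩)]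
        · rw [hψ1', one_mul]
        · intro s hs hs1; rw [hψzero s hs1, zero_mul]
      have hB : ∀ k ∈ Finset.Icc 1 j, (∑' i : ℕ, ψ (i + k + 1)) = 0 := by
        intro k hk
        have h1 : ∀ i : ℕ, ψ (i + k + 1) = 0 := by
          intro i
          apply hψzero
          have := (Finset.mem_Icc.1 hk).1
          omega
        simp [h1]
      have hp : p j = (1 / ET) * a (j - 1)
          + lam * ∑ k ∈ Finset.Icc 1 j,
              a (j - k) * ∑ i ∈ Finset.Icc 1 k, p i * (∑' m : ℕ, b (m + (k - i) + 1)) := by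
        rw [hrec j hj1, hA, Finset.mul_sum]
        congr 1
        apply Finset.sum_congr rfl
        intro k hk
        rw [hB k hk]
        ring
      have hw_eq : ∀ k, 1 ≤ k →
          (∑ i ∈ Finset.Icc 1 k, p i * (∑' m : ℕ, b (m + (k - i) + 1))) * z ^ k = w k := by
        intro k hk
        rw [Finset.sum_mul, hw]
        dsimp only
        have hins : Finset.range (k + 1) = insert 0 (Finset.Icc 1 k) := by
          ext x; simp only [Finset.mem_range, Finset.mem_insert, Finset.mem_Icc]; omega
        rw [hins, Finset.sum_insert (by simp), hq0, zero_mul, zero_add]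
        apply Finset.sum_congr rfl
        intro i hi
        obtain ⟨hi1, hik⟩ := Finset.mem_Icc.1 hi
        have hzk : z ^ k = z ^ i * z ^ (k - i) := by rw [← pow_add]; congr 1; omega
        rw [hq, hv]
        dsimp only
        rw [hzk]
        ring
      have hzj : z ^ j = z ^ (j - 1) * z := by
        conv_lhs => rw [show j = (j - 1) + 1 by omega]
        rw [pow_succ]
      have step1 : q j = (z / ET) * u (j - 1)
          + lam * ∑ k ∈ Finset.Icc 1 j, u (j - k) * w k := by
        rw [hq]
        dsimp only
        rw [hp, add_mul]
        congr 1
        · rw [hu]; dsimp only; rw [hzj]; ring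
        · rw [mul_assoc]
          congr 1
          rw [Finset.sum_mul]
          apply Finset.sum_congr rfl
          intro k hk
          obtain ⟨hk1, hkj⟩ := Finset.mem_Icc.1 hk
          rw [← hw_eq k hk1]
          have hzjk : z ^ j = z ^ (j - k) * z ^ k := by rw [← pow_add]; congr 1; omega
          rw [hu]
          dsimp only
          rw [hzjk]
          ring
      have hext : ∑ k ∈ Finset.Icc 1 j, u (j - k) * w k
          = ∑ k ∈ Finset.range (j + 1), u (j - k) * w k := by
        have hins : Finset.range (j + 1) = insert 0 (Finset.Icc 1 j) := by
          ext x; simp only [Finset.mem_range, Finset.mem_insert, Finset.mem_Icc]; omega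
        rw [hins, Finset.sum_insert (by simp), hw0, mul_zero, zero_add]
      have hrefl : ∑ k ∈ Finset.range (j + 1), u (j - k) * w k
          = ∑ k ∈ Finset.range (j + 1), u k * w (j - k) := by
        have h := Finset.sum_range_reflect (fun k => u k * w (j - k)) (j + 1)
        rw [← h]
        apply Finset.sum_congr rfl
        intro k hk
        have hk' : k ≤ j := by
          have := Finset.mem_range.1 hk; omega
        rw [show j + 1 - 1 - k = j - k by omega, show j - (j - k) = k by omega]
      rw [step1, hext, hrefl, hr]
      dsimp only
      rw [if_neg (by omega)]
  -- summability of r and its sum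
  have hsr : Summable r := by
    apply (summable_nat_add_iff 1).1
    apply (hsu.mul_left (z / ET)).congr
    intro n
    rw [hr]
    dsimp only
    rw [if_neg (Nat.succ_ne_zero n), Nat.add_sub_cancel]
  have hr0 : r 0 = 0 := by simp [hr]
  have hrsum : (∑' j, r j) = (z / ET) * Az := by
    rw [Summable.tsum_eq_zero_add hsr, hr0, zero_add, hAz, ← tsum_mul_left]
    apply tsum_congr
    intro n
    rw [hr]
    dsimp only
    rw [if_neg (Nat.succ_ne_zero n), Nat.add_sub_cancel]
  -- the contraction constant
  have hcle : lam * Az * Cz ≤ lam * ES * EB := by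
    calc lam * Az * Cz ≤ lam * ES * Cz :=
          mul_le_mul_of_nonneg_right (mul_le_mul_of_nonneg_left hAzle hlam.le) hCznn
      _ ≤ lam * ES * EB := mul_le_mul_of_nonneg_left hCzle (mul_nonneg hlam.le hESnn)
  have hclt : lam * Az * Cz < 1 := lt_of_le_of_lt hcle hρ1
  have hcnn : 0 ≤ lam * Az * Cz := by positivity
  have h1c : 0 < 1 - lam * Az * Cz := by linarith
  -- summability of q
  have hsq : Summable q := by
    apply summable_of_sum_range_le hqnn (c := ((z / ET) * Az) / (1 - lam * Az * Cz))
    intro N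
    have hSr : ∑ j ∈ Finset.range N, r j ≤ (z / ET) * Az := by
      rw [← hrsum]
      exact Summable.sum_le_tsum (Finset.range N) (fun i _ => hrnn i) hsr
    have hU : ∑ k ∈ Finset.range N, u k ≤ Az := by
      rw [hAz]; exact Summable.sum_le_tsum _ (fun i _ => hunn i) hsu
    have hV : ∑ m ∈ Finset.range N, v m ≤ Cz := by
      rw [hCzdef]; exact Summable.sum_le_tsum _ (fun i _ => hvnn i) hsv
    have hSqnn : 0 ≤ ∑ i ∈ Finset.range N, q i := Finset.sum_nonneg fun i _ => hqnn i
    have hWnn : 0 ≤ ∑ m ∈ Finset.range N, w m := Finset.sum_nonneg fun m _ => hwnn m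
    have hUnn : 0 ≤ ∑ k ∈ Finset.range N, u k := Finset.sum_nonneg fun k _ => hunn k
    have hWb : ∑ m ∈ Finset.range N, w m ≤ (∑ i ∈ Finset.range N, q i) * Cz := by
      have h1 : ∑ m ∈ Finset.range N, w m
          ≤ (∑ i ∈ Finset.range N, q i) * ∑ m ∈ Finset.range N, v m := by
        have h2 : ∑ m ∈ Finset.range N, w m
            = ∑ j ∈ Finset.range N, ∑ k ∈ Finset.range (j + 1), q k * v (j - k) := by
          apply Finset.sum_congr rfl; intro m _; rw [hw]
        rw [h2]
        exact conv_partial_le q v hqnn hvnn N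
      calc ∑ m ∈ Finset.range N, w m
          ≤ (∑ i ∈ Finset.range N, q i) * ∑ m ∈ Finset.range N, v m := h1
        _ ≤ (∑ i ∈ Finset.range N, q i) * Cz := mul_le_mul_of_nonneg_left hV hSqnn
    have hconv : ∑ j ∈ Finset.range N, ∑ k ∈ Finset.range (j + 1), u k * w (j - k)
        ≤ Az * ((∑ i ∈ Finset.range N, q i) * Cz) := by
      calc ∑ j ∈ Finset.range N, ∑ k ∈ Finset.range (j + 1), u k * w (j - k)
          ≤ (∑ k ∈ Finset.range N, u k) * ∑ m ∈ Finset.range N, w m :=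
            conv_partial_le u w hunn hwnn N
        _ ≤ Az * ((∑ i ∈ Finset.range N, q i) * Cz) :=
            mul_le_mul hU hWb hWnn hAznn
    have hSN : ∑ j ∈ Finset.range N, q j
        ≤ (z / ET) * Az + lam * Az * Cz * ∑ j ∈ Finset.range N, q j := by
      calc ∑ j ∈ Finset.range N, q j
          = ∑ j ∈ Finset.range N, (r j + lam * ∑ k ∈ Finset.range (j + 1), u k * w (j - k)) :=
            Finset.sum_congr rfl (fun j _ => hkey j)
        _ = (∑ j ∈ Finset.range N, r j)
            + lam * ∑ j ∈ Finset.range N, ∑ k ∈ Finset.range (j + 1), u k * w (j - k) := by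
            rw [Finset.sum_add_distrib, Finset.mul_sum]
        _ ≤ (z / ET) * Az + lam * (Az * ((∑ i ∈ Finset.range N, q i) * Cz)) :=
            add_le_add hSr (mul_le_mul_of_nonneg_left hconv hlam.le)
        _ = (z / ET) * Az + lam * Az * Cz * ∑ j ∈ Finset.range N, q j := by ring
    rw [le_div_iff₀ h1c]
    nlinarith [hSN]
  set Q := ∑' j, q j with hQdef
  -- Cauchy products
  have hnu := norm_eq_self_of_nonneg hunn hsu
  have hnv := norm_eq_self_of_nonneg hvnn hsv
  have hnq := norm_eq_self_of_nonneg hqnn hsq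
  have hWs : Summable w := by
    apply (summable_norm_sum_mul_range_of_summable_norm hnq hnv).of_norm.congr
    intro n
    rw [hw]
  have hnw := norm_eq_self_of_nonneg hwnn hWs
  have hWval : Q * Cz = ∑' k, w k := by
    rw [hQdef, hCzdef, tsum_mul_tsum_eq_tsum_sum_range_of_summable_norm hnq hnv]
  have hconvS : Summable (fun j => ∑ k ∈ Finset.range (j + 1), u k * w (j - k)) :=
    (summable_norm_sum_mul_range_of_summable_norm hnu hnw).of_norm
  have hconvval : Az * (∑' k, w k) = ∑' j, ∑ k ∈ Finset.range (j + 1), u k * w (j - k) := by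
    rw [hAz]
    exact tsum_mul_tsum_eq_tsum_sum_range_of_summable_norm hnu hnw
  have hQeq : Q = (z / ET) * Az + lam * (Az * (Q * Cz)) := by
    calc Q = ∑' j, (r j + lam * ∑ k ∈ Finset.range (j + 1), u k * w (j - k)) := by
          rw [hQdef]; exact tsum_congr hkey
      _ = (∑' j, r j) + ∑' j, lam * ∑ k ∈ Finset.range (j + 1), u k * w (j - k) :=
          Summable.tsum_add hsr (hconvS.mul_left lam)
      _ = (z / ET) * Az + lam * ∑' j, ∑ k ∈ Finset.range (j + 1), u k * w (j - k) := by
          rw [hrsum, tsum_mul_left]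
      _ = (z / ET) * Az + lam * (Az * (Q * Cz)) := by rw [← hconvval, ← hWval]
  have hQA : Q * (1 - lam * Az * Cz) = z * Az / ET := by
    linear_combination hQeq
  have hQval : Q = z * Az / ET / (1 - lam * Az * Cz) := by
    rw [eq_div_iff h1c.ne']
    exact hQA
  have hden : lam * Az * (1 - Bz) / (1 - z) = lam * Az * Cz := by
    rw [← hCid]
    field_simp
  rw [hden, hQval]
  have hne1 : (1:ℝ) - lam * ES * EB ≠ 0 := by linarith
  field_simp
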